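/- With C_{α,α'} as above: for distinct a, a' ∈ F_q and any α, α' ∈ F_q, C_{a,α} C_{a',α'} = J_{q²}. -/
import Mathlib


open Matrix Kronecker BigOperators
open scoped Classical

noncomputable section

variable (F : Type*) [Field F] [Fintype F]

/-- The regular permutation representation of the additive group of `F`:
`φ(α)` is the permutation matrix of translation by `α`. -/
def phi (α : F) : Matrix F F ℝ :=
  Matrix.of fun x y => if x + α = y then 1 else 0

/-- The auxiliary `q² × q²` matrix `C_{a,α}` whose `(β,β')`-block is `φ(a(β'-β)+α)`. -/
def Cmat (a α : F) : Matrix (F × F) (F × F) ℝ :=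
  Matrix.of fun p q => if p.2 + (a * (q.1 - p.1) + α) = q.2 then 1 else 0

/-- All-ones matrix. -/
def Jmat (ι : Type*) : Matrix ι ι ℝ := Matrix.of fun _ _ => 1

/-- The `q² × q²` back identity (exchange) matrix indexed by `F × F`,
corresponding to negation of indices. -/
def Rmat : Matrix (F × F) (F × F) ℝ :=
  Matrix.of fun p q => if q = (-p.1, -p.2) then 1 else 0

end

/-- For distinct `a ≠ a'`, `C_{a,α} C_{a',α'} = J_{q²}`. -/
theorem Cmat_mul_distinct (F : Type*) [Field F] [Fintype F] (hodd : Odd (Fintype.card F))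
    (a a' α α' : F) (h : a ≠ a') :
    Cmat F a α * Cmat F a' α' = Jmat (F × F) := by
  ext p r
  simp only [Matrix.mul_apply, Cmat, Jmat, Matrix.of_apply]
  rw [Fintype.sum_prod_type]
  have step1 : ∀ γ : F, (∑ δ : F,
      (if p.2 + (a * (γ - p.1) + α) = δ then (1:ℝ) else 0) *
        (if δ + (a' * (r.1 - γ) + α') = r.2 then 1 else 0)) =
      if p.2 + (a * (γ - p.1) + α) + (a' * (r.1 - γ) + α') = r.2 then 1 else 0 := by
    intro γ
    rw [Finset.sum_eq_single (p.2 + (a * (γ - p.1) + α))]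
    · simp
    · intro b _ hb
      simp [Ne.symm hb]
    · simp
  simp only [step1]
  have hne : a - a' ≠ 0 := sub_ne_zero.mpr h
  have step2 : ∀ γ : F,
      (p.2 + (a * (γ - p.1) + α) + (a' * (r.1 - γ) + α') = r.2) ↔
      γ = (r.2 - p.2 - α - α' + a * p.1 - a' * r.1) / (a - a') := by
    intro γ
    rw [eq_div_iff hne]
    constructor <;> intro hγ <;> [skip; skip] <;> linear_combination hγ
  simp only [step2]
  simp
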